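/- Let ζ be a primitive 5th root of unity, F = ζ³W + X + ζY + ζ⁴Z, and σ the cyclic substitution (W,X,Y,Z) ↦ (X,Y,Z,W). Then the map (W:X:Y:Z) ↦ (F : Fσ : Fσ² : Fσ³ : −(F + Fσ + Fσ² + Fσ³)) defines an isomorphism from the cubic surface {WX² + XY² + YZ² + Z²Y = 0} ⊂ P³ onto the diagonal Clebsch cubic {Σ_{i=0}^{4} X_i = Σ_{i=0}^{4} X_i³ = 0} ⊂ P⁴. -/

import Mathlib

/-!
Up to the order of its coordinates, `clebschMap ζ` is the discrete Fourier transform on `ℤ/5`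
(with respect to the character `a ↦ ζ ^ a`) of the spectrum that puts `ζ³W, X, ζY, ζ⁴Z` at the
frequencies `1, 3, 4, 2 = 3⁰, 3¹, 3², 3³` and nothing at `0`. By Fourier inversion the spectra
vanishing at `0` correspond bijectively to the points of the hyperplane `∑ Xᵢ = 0`.
For a Fourier transform `x` of `y`, `∑ xᵢ³ = 5 ∑_{a+b+c=0} y_a y_b y_c`; among nonzero residues
mod 5 the only zero-sum triples are the permutations of `(a, a, 3a)`, and with `a = 3ᵏ` these give
exactly the cyclic monomials `W²X, X²Y, Y²Z, Z²W`, so `∑ Xᵢ³ = 15 ζ (W²X + X²Y + Y²Z + Z²W)`.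
-/

open Finset

/-- Projective equality of homogeneous coordinate vectors. -/
def ProjEq {n : ℕ} (v w : Fin n → ℂ) : Prop := ∃ c : ℂ, c ≠ 0 ∧ w = c • v

/-- The cubic form `W²X + X²Y + Y²Z + Z²W` (the equation of the Clebsch cubic
surface in the coordinates of the paper) with
`(W, X, Y, Z) = (v 0, v 1, v 2, v 3)`. -/
def srcCubic (v : Fin 4 → ℂ) : ℂ :=
  v 0 ^ 2 * v 1 + v 1 ^ 2 * v 2 + v 2 ^ 2 * v 3 + v 3 ^ 2 * v 0

/-- The linear form `Fσᵏ`, where `F = ζ³W + X + ζY + ζ⁴Z` and `σ` is the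
cyclic substitution `(W,X,Y,Z) ↦ (X,Y,Z,W)` (indices of `Fin 4` are cyclic). -/
def Fσ (ζ : ℂ) (k : Fin 4) (v : Fin 4 → ℂ) : ℂ :=
  ζ ^ 3 * v k + v (k + 1) + ζ * v (k + 2) + ζ ^ 4 * v (k + 3)

/-- The map `(W:X:Y:Z) ↦ (F : Fσ : Fσ² : Fσ³ : -(F + Fσ + Fσ² + Fσ³))`. -/
def clebschMap (ζ : ℂ) (v : Fin 4 → ℂ) : Fin 5 → ℂ :=
  ![Fσ ζ 0 v, Fσ ζ 1 v, Fσ ζ 2 v, Fσ ζ 3 v,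
    -(Fσ ζ 0 v + Fσ ζ 1 v + Fσ ζ 2 v + Fσ ζ 3 v)]

namespace AddChar

variable {R S : Type*} [CommRing R] [Fintype R] [CommRing S]

def dft (ψ : AddChar R S) (y : R → S) (i : R) : S := ∑ a, y a * ψ (a * i)

theorem dft_smul (ψ : AddChar R S) (c : S) (y : R → S) : ψ.dft (c • y) = c • ψ.dft y := by
  ext i
  simp [dft, mul_sum, mul_assoc]

variable [IsDomain S] {ψ : AddChar R S}

theorem sum_apply_mul_eq_ite [DecidableEq R] (hψ : ψ.IsPrimitive) (b : R) :
    ∑ i, ψ (b * i) = if b = 0 then (Fintype.card R : S) else 0 := by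
  simpa only [mul_comm b, Nat.cast_ite, Nat.cast_zero] using sum_mulShift b hψ

theorem sum_dft (hψ : ψ.IsPrimitive) (y : R → S) : ∑ i, ψ.dft y i = Fintype.card R * y 0 := by
  classical
  unfold dft
  rw [sum_comm]
  simp [← mul_sum, sum_apply_mul_eq_ite hψ, mul_comm]

theorem dft_dft (hψ : ψ.IsPrimitive) (y : R → S) (j : R) :
    ψ.dft (ψ.dft y) j = Fintype.card R * y (-j) := by
  classical
  simp_rw [dft, sum_mul, mul_assoc, ← map_add_eq_mul, mul_comm _ j, ← add_mul]
  rw [sum_comm]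
  simp_rw [← mul_sum, sum_apply_mul_eq_ite hψ]
  simp [add_eq_zero_iff_eq_neg, mul_comm]

theorem dft_injective [CharZero S] (hψ : ψ.IsPrimitive) : Function.Injective ψ.dft := by
  intro y y' h
  ext j
  have hcard : (Fintype.card R : S) ≠ 0 := by simp [Fintype.card_ne_zero]
  have := dft_dft hψ y (-j)
  rw [h, dft_dft hψ, neg_neg] at this
  exact (mul_left_cancel₀ hcard this).symm

theorem dft_surjective {K : Type*} [Field K] [CharZero K] {ψ : AddChar R K}
    (hψ : ψ.IsPrimitive) : Function.Surjective ψ.dft := by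
  intro x
  have hcard : (Fintype.card R : K) ≠ 0 := by simp [Fintype.card_ne_zero]
  refine ⟨(Fintype.card R : K)⁻¹ • ψ.dft (fun a ↦ x (-a)), funext fun j ↦ ?_⟩
  rw [dft_smul, Pi.smul_apply, dft_dft hψ, neg_neg, smul_eq_mul, inv_mul_cancel_left₀ hcard]

theorem sum_dft_pow_three (hψ : ψ.IsPrimitive) (y : R → S) :
    ∑ i, ψ.dft y i ^ 3 = Fintype.card R * ∑ a, ∑ b, y a * y b * y (-(a + b)) := by
  classical
  have expand : ∑ i, ψ.dft y i ^ 3 =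
      ∑ a, ∑ b, ∑ c, y a * y b * y c * ∑ i, ψ ((a + b + c) * i) := by
    simp_rw [dft, pow_three, sum_mul_sum, mul_sum]
    rw [sum_comm]
    refine sum_congr rfl fun a _ ↦ ?_
    rw [sum_comm]
    refine sum_congr rfl fun b _ ↦ ?_
    rw [sum_comm]
    refine sum_congr rfl fun c _ ↦ sum_congr rfl fun i _ ↦ ?_
    rw [add_mul, add_mul, map_add_eq_mul, map_add_eq_mul]
    ring
  simp only [expand, sum_apply_mul_eq_ite hψ, add_eq_zero_iff_eq_neg', mul_ite, mul_zero,
    Fintype.sum_ite_eq', mul_sum]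
  exact sum_congr rfl fun a _ ↦ sum_congr rfl fun b _ ↦ mul_comm _ _

end AddChar

open AddChar

theorem ZMod.sum_univ_five {M : Type*} [AddCommMonoid M] (f : ZMod 5 → M) :
    ∑ a, f a = f 0 + f 1 + f 2 + f 3 + f 4 :=
  Fin.sum_univ_five f

theorem ZMod.funext_five {M : Type*} {f g : ZMod 5 → M} (h0 : f 0 = g 0) (h1 : f 1 = g 1)
    (h2 : f 2 = g 2) (h3 : f 3 = g 3) (h4 : f 4 = g 4) : f = g := by
  funext a
  fin_cases a <;> assumption

def clebschSpectrum (ζ : ℂ) (v : Fin 4 → ℂ) : ZMod 5 → ℂ :=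
  ![0, ζ ^ 3 * v 0, ζ ^ 4 * v 3, v 1, ζ * v 2]

section clebschSpectrum

variable (ζ : ℂ) (v : Fin 4 → ℂ)

@[simp] theorem clebschSpectrum_zero : clebschSpectrum ζ v 0 = 0 := rfl
@[simp] theorem clebschSpectrum_one : clebschSpectrum ζ v 1 = ζ ^ 3 * v 0 := rfl
@[simp] theorem clebschSpectrum_two : clebschSpectrum ζ v 2 = ζ ^ 4 * v 3 := rfl
@[simp] theorem clebschSpectrum_three : clebschSpectrum ζ v 3 = v 1 := rfl
@[simp] theorem clebschSpectrum_four : clebschSpectrum ζ v 4 = ζ * v 2 := rfl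

end clebschSpectrum

theorem sum_clebschMap (ζ : ℂ) (v : Fin 4 → ℂ) : ∑ i, clebschMap ζ v i = 0 := by
  simp only [clebschMap, Fin.sum_univ_five, Matrix.cons_val]
  ring

variable {ζ : ℂ}

theorem clebschSpectrum_injective (hζ : ζ ≠ 0) : Function.Injective (clebschSpectrum ζ) := by
  intro v v' h
  have h1 := congrFun h 1
  have h2 := congrFun h 2
  have h3 := congrFun h 3
  have h4 := congrFun h 4
  simp only [clebschSpectrum_one, clebschSpectrum_two, clebschSpectrum_three,
    clebschSpectrum_four, mul_right_inj' (pow_ne_zero _ hζ), mul_right_inj' hζ] at h1 h2 h3 h4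
  funext k
  fin_cases k <;> assumption

theorem exists_clebschSpectrum_eq (hζ : ζ ≠ 0) {y : ZMod 5 → ℂ} (hy : y 0 = 0) :
    ∃ v, clebschSpectrum ζ v = y := by
  refine ⟨![y 1 / ζ ^ 3, y 3, y 4 / ζ, y 2 / ζ ^ 4], ZMod.funext_five ?_ ?_ ?_ ?_ ?_⟩ <;>
    simp [hy, mul_div_cancel₀, hζ]

theorem sum_clebschSpectrum_cube (h5 : ζ ^ 5 = 1) (v : Fin 4 → ℂ) :
    ∑ a, ∑ b, clebschSpectrum ζ v a * clebschSpectrum ζ v b * clebschSpectrum ζ v (-(a + b)) =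
      3 * ζ * srcCubic v := by
  simp only [ZMod.sum_univ_five]
  reduce_mod_char
  simp only [clebschSpectrum_zero, clebschSpectrum_one, clebschSpectrum_two,
    clebschSpectrum_three, clebschSpectrum_four, srcCubic]
  linear_combination 3 * ζ * (v 0 ^ 2 * v 1 + v 2 ^ 2 * v 3 + (ζ ^ 5 + 1) * v 3 ^ 2 * v 0) * h5

theorem clebschMap_eq_dft (hζ : IsPrimitiveRoot ζ 5) (v : Fin 4 → ℂ) :
    clebschMap ζ v = (zmodChar 5 hζ.pow_eq_one).dft (clebschSpectrum ζ v) ∘ ![0, 1, 3, 2, 4] := by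
  have h5 := hζ.pow_eq_one
  have hΦ : ζ ^ 4 + ζ ^ 3 + ζ ^ 2 + ζ + 1 = 0 := by
    simpa [Finset.sum_range_succ, add_comm, add_left_comm, add_assoc]
      using hζ.geom_sum_eq_zero (by norm_num)
  funext j
  fin_cases j <;>
    simp only [clebschMap, Fσ, dft, ZMod.sum_univ_five, Function.comp_apply, Fin.zero_eta,
      Fin.mk_one, Fin.reduceFinMk, Fin.reduceAdd, Matrix.cons_val, zmodChar_apply, ZMod.val_mul,
      ZMod.val_ofNat, ZMod.val_one_eq_one_mod, ZMod.val_zero, Nat.reduceMul, Nat.reduceMod,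
      clebschSpectrum_zero, clebschSpectrum_one, clebschSpectrum_two, clebschSpectrum_three,
      clebschSpectrum_four, zero_mul, pow_zero, pow_one, mul_one]
  · ring
  · linear_combination -(v 2 + ζ * v 3) * h5
  · linear_combination -(v 3 + ζ * v 0) * h5
  · linear_combination -(v 0 + ζ ^ 3 * v 3) * h5
  · linear_combination -(v 0 + v 1 + v 2 + v 3) * hΦ - ζ ^ 2 * (v 0 + v 3) * h5

theorem sum_clebschMap_pow_three (hζ : IsPrimitiveRoot ζ 5) (v : Fin 4 → ℂ) :
    ∑ i, clebschMap ζ v i ^ 3 = 15 * ζ * srcCubic v := by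
  set ψ := zmodChar 5 hζ.pow_eq_one
  calc ∑ i, clebschMap ζ v i ^ 3 = ∑ a, ψ.dft (clebschSpectrum ζ v) a ^ 3 := by
        simp only [clebschMap_eq_dft hζ, Fin.sum_univ_five, ZMod.sum_univ_five,
          Function.comp_apply, Matrix.cons_val]
        ring
    _ = 15 * ζ * srcCubic v := by
        rw [sum_dft_pow_three (zmodChar_primitive_of_primitive_root 5 hζ),
          sum_clebschSpectrum_cube hζ.pow_eq_one, ZMod.card]
        ring

theorem clebschMap_injective (hζ : IsPrimitiveRoot ζ 5) : Function.Injective (clebschMap ζ) := by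
  intro v v' h
  simp only [clebschMap_eq_dft hζ] at h
  refine clebschSpectrum_injective (hζ.ne_zero (by norm_num))
    (dft_injective (zmodChar_primitive_of_primitive_root 5 hζ)
      (ZMod.funext_five (congrFun h 0) (congrFun h 1) (congrFun h 3) (congrFun h 2) (congrFun h 4)))

theorem exists_clebschMap_eq (hζ : IsPrimitiveRoot ζ 5) {w : Fin 5 → ℂ} (hw : ∑ i, w i = 0) :
    ∃ v, clebschMap ζ v = w := by
  have hψ := zmodChar_primitive_of_primitive_root 5 hζ
  obtain ⟨y, hy⟩ := dft_surjective hψ ![w 0, w 1, w 3, w 2, w 4]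
  have hy0 : y 0 = 0 := by
    have h := sum_dft hψ y
    rw [hy, ZMod.card] at h
    change ∑ i : Fin 5, ![w 0, w 1, w 3, w 2, w 4] i = 5 * y 0 at h
    simp only [Fin.sum_univ_five, Matrix.cons_val] at hw h
    have : (5 : ℂ) * y 0 = 0 := by linear_combination -h + hw
    simpa using this
  obtain ⟨v, rfl⟩ := exists_clebschSpectrum_eq (hζ.ne_zero (by norm_num)) hy0
  refine ⟨v, funext fun j ↦ ?_⟩
  rw [clebschMap_eq_dft hζ, hy]
  fin_cases j <;> rfl

/-- Let `ζ` be a primitive 5th root of unity, `F = ζ³W + X + ζY + ζ⁴Z` and `σ`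
the cyclic substitution `(W,X,Y,Z) ↦ (X,Y,Z,W)`.  Then the map
`(W:X:Y:Z) ↦ (F : Fσ : Fσ² : Fσ³ : -∑ Fσⁱ)` defines an isomorphism from the
cubic surface `{W²X + X²Y + Y²Z + Z²W = 0} ⊂ ℙ³` onto the diagonal Clebsch
cubic `{∑ Xᵢ = ∑ Xᵢ³ = 0} ⊂ ℙ⁴`: it is an injective linear map whose image
is the hyperplane `∑ Xᵢ = 0`, it carries the source cubic exactly onto the
locus `∑ Xᵢ³ = 0`, and the induced projective map is onto the Clebsch
surface. -/
theorem stmt_18 (ζ : ℂ) (hζ : IsPrimitiveRoot ζ 5) :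
    Function.Injective (clebschMap ζ) ∧
    (∀ v : Fin 4 → ℂ, ∑ i, clebschMap ζ v i = 0) ∧
    (∀ v : Fin 4 → ℂ, srcCubic v = 0 ↔ ∑ i, (clebschMap ζ v i) ^ 3 = 0) ∧
    (∀ w : Fin 5 → ℂ, ∑ i, w i = 0 → ∃ v : Fin 4 → ℂ, clebschMap ζ v = w) ∧
    (∀ w : Fin 5 → ℂ, w ≠ 0 → ∑ i, w i = 0 → ∑ i, (w i) ^ 3 = 0 →
      ∃ v : Fin 4 → ℂ, v ≠ 0 ∧ srcCubic v = 0 ∧ ProjEq (clebschMap ζ v) w) := by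
  have hcubic (v : Fin 4 → ℂ) : srcCubic v = 0 ↔ ∑ i, clebschMap ζ v i ^ 3 = 0 := by
    simp [sum_clebschMap_pow_three hζ, hζ.ne_zero (by norm_num)]
  refine ⟨clebschMap_injective hζ, sum_clebschMap ζ, hcubic,
    fun w ↦ exists_clebschMap_eq hζ, fun w hw0 hw hw3 ↦ ?_⟩
  obtain ⟨v, rfl⟩ := exists_clebschMap_eq hζ hw
  refine ⟨v, fun hv ↦ hw0 ?_, (hcubic v).2 hw3, 1, one_ne_zero, (one_smul _ _).symm⟩
  simp [hv, clebschMap, Fσ]
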